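/- arXiv:1508.03202 — 4 statements merged into one kernel-verified Lean document; each statement's English description precedes it below -/
import Mathlib

section
/- Let H be a complex Hilbert space and A a bounded positive self-adjoint operator on H. Then for every \xi \in H, \inf_{\eta \in H} \left( \|\eta\|^2 + \langle A(\xi - \eta), \xi - \eta \rangle \right) = \langle A(1+A)^{-1}\xi, \xi \rangle, and the infimum is attained at \eta_0 = A(1+A)^{-1}\xi. -/
open scoped InnerProductSpace

/-!
Put `ζ = (1 + A)⁻¹ ξ`, so that `ξ = ζ + A ζ` and `η₀ = A ζ`. Writing `η = A ζ + d`, the cross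
terms `2 re ⟪A ζ, d⟫` coming from `‖η‖²` and from `⟪A (ζ - d), ζ - d⟫` cancel by symmetry of `A`,
leaving `‖η‖² + re ⟪A (ξ - η), ξ - η⟫ = re ⟪A ζ, ξ⟫ + ‖d‖² + re ⟪A d, d⟫`, which is minimal
at `d = 0` by positivity.
-/

namespace LinearMap

variable {𝕜 E : Type*} [RCLike 𝕜] [NormedAddCommGroup E] [InnerProductSpace 𝕜 E]

open RCLike

theorem IsSymmetric.norm_sq_add_re_inner_sub_eq {A : E →ₗ[𝕜] E} (hA : A.IsSymmetric) (ζ η : E) :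
    ‖η‖ ^ 2 + re ⟪A (ζ + A ζ - η), ζ + A ζ - η⟫_𝕜 =
      re ⟪A ζ, ζ + A ζ⟫_𝕜 + ‖η - A ζ‖ ^ 2 + re ⟪A (η - A ζ), η - A ζ⟫_𝕜 := by
  obtain ⟨d, rfl⟩ : ∃ d, η = A ζ + d := ⟨η - A ζ, (add_sub_cancel _ _).symm⟩
  have hξη : ζ + A ζ - (A ζ + d) = ζ - d := by abel
  have hcross : re ⟪A d, ζ⟫_𝕜 = re ⟪A ζ, d⟫_𝕜 := by
    rw [hA d ζ, inner_re_symm (𝕜 := 𝕜)]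
  rw [hξη, add_sub_cancel_left, norm_add_sq (𝕜 := 𝕜), inner_add_right,
    inner_self_eq_norm_sq_to_K (𝕜 := 𝕜), map_sub, inner_sub_left, inner_sub_right, inner_sub_right]
  simp only [map_add, map_sub, ← ofReal_pow, ofReal_re, hcross]
  ring

theorem IsSymmetric.norm_sq_add_re_inner_sub_self {A : E →ₗ[𝕜] E} (hA : A.IsSymmetric)
    (ζ : E) :
    ‖A ζ‖ ^ 2 + re ⟪A (ζ + A ζ - A ζ), ζ + A ζ - A ζ⟫_𝕜 = re ⟪A ζ, ζ + A ζ⟫_𝕜 := by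
  simpa using hA.norm_sq_add_re_inner_sub_eq ζ (A ζ)

theorem IsPositive.re_inner_le_norm_sq_add_re_inner_sub {A : E →ₗ[𝕜] E} (hA : A.IsPositive)
    (ζ η : E) :
    re ⟪A ζ, ζ + A ζ⟫_𝕜 ≤ ‖η‖ ^ 2 + re ⟪A (ζ + A ζ - η), ζ + A ζ - η⟫_𝕜 := by
  rw [hA.isSymmetric.norm_sq_add_re_inner_sub_eq]
  have hpos := hA.re_inner_nonneg_left (η - A ζ)
  linarith [sq_nonneg ‖η - A ζ‖]

end LinearMap

theorem stmt_3_general {H : Type*} [NormedAddCommGroup H] [InnerProductSpace ℂ H]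
    (A B : H →L[ℂ] H) (hA : A.IsPositive)
    (hB : (1 + A) * B = 1) (ξ : H) :
    (∀ η : H, (⟪A (B ξ), ξ⟫_ℂ).re ≤ ‖η‖ ^ 2 + (⟪A (ξ - η), ξ - η⟫_ℂ).re) ∧
    ‖A (B ξ)‖ ^ 2 + (⟪A (ξ - A (B ξ)), ξ - A (B ξ)⟫_ℂ).re = (⟪A (B ξ), ξ⟫_ℂ).re := by
  have hξ : B ξ + A (B ξ) = ξ := by
    simpa using congr($hB ξ)
  set ζ := B ξ
  rw [← hξ]
  exact ⟨hA.toLinearMap.re_inner_le_norm_sq_add_re_inner_sub ζ,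
    hA.isSymmetric.norm_sq_add_re_inner_sub_self ζ⟩

/-- Let `A` be a bounded positive self-adjoint operator on a complex Hilbert space, and `B`
the (two-sided) inverse of `1 + A`. Then for every `ξ`,
`inf_η (‖η‖² + ⟨A(ξ-η), ξ-η⟩) = ⟨A(1+A)⁻¹ξ, ξ⟩`, the infimum being attained at
`η₀ = A(1+A)⁻¹ξ`. -/
theorem stmt_3 {H : Type*} [NormedAddCommGroup H] [InnerProductSpace ℂ H] [CompleteSpace H]
    (A B : H →L[ℂ] H) (hA : A.IsPositive)
    (hB : (1 + A) * B = 1) (hB' : B * (1 + A) = 1) (ξ : H) :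
    (∀ η : H, (⟪A (B ξ), ξ⟫_ℂ).re ≤ ‖η‖ ^ 2 + (⟪A (ξ - η), ξ - η⟫_ℂ).re) ∧
    ‖A (B ξ)‖ ^ 2 + (⟪A (ξ - A (B ξ)), ξ - A (B ξ)⟫_ℂ).re = (⟪A (B ξ), ξ⟫_ℂ).re :=
  stmt_3_general A B hA hB ξ
end

section
/- Let A be a unital C*-algebra (for instance the bounded operators on a complex Hilbert space) and a \in A a positive element. Then for every \varepsilon > 0 and every \alpha \in (0,1), the Bochner integral \frac{\sin(\alpha\pi)}{\pi} \int_0^{\infty} s^{-\alpha} \, (a + (s+\varepsilon)\cdot 1)^{-1} \, ds converges in norm (the integrand having norm at most s^{-\alpha}(s+\varepsilon)^{-1}) and equals (a + \varepsilon \cdot 1)^{-\alpha}, the real power defined by the continuous functional calculus on the positive invertible element a + \varepsilon \cdot 1. -/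
/-!
For a scalar `x > 0`, the substitutions `s = x t` and `t = y / (1 - y)` turn
`∫₀^∞ s^(-α) (x + s)⁻¹ ds` into `x^(-α) B(1 - α, α)`, which is `x^(-α) π / sin (π α)` by Euler's
reflection formula. The element `b = a + ε • 1` satisfies `b ≥ ε • 1`, so its spectrum lies in
`[ε, ∞)`, where `s^(-α) (x + s)⁻¹` is dominated by the integrable `s^(-α) (ε + s)⁻¹` uniformly
in `x`. Hence the scalar identity passes through the continuous functional calculus, which sends
`x ↦ s^(-α) (x + s)⁻¹` to `s^(-α) • (b + s • 1)⁻¹`.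
-/

open MeasureTheory Real Set

namespace Real

lemma ofReal_rpow_mul_one_sub_rpow {u v x : ℝ} (hx : x ∈ Icc (0 : ℝ) 1) :
    ((x ^ (u - 1) * (1 - x) ^ (v - 1) : ℝ) : ℂ) =
      (x : ℂ) ^ ((u : ℂ) - 1) * (1 - (x : ℂ)) ^ ((v : ℂ) - 1) := by
  rw [Complex.ofReal_mul, Complex.ofReal_cpow hx.1, Complex.ofReal_cpow (sub_nonneg.2 hx.2)]
  push_cast
  rfl

lemma integrableOn_rpow_mul_one_sub_rpow {u v : ℝ} (hu : 0 < u) (hv : 0 < v) :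
    IntegrableOn (fun x : ℝ => x ^ (u - 1) * (1 - x) ^ (v - 1)) (Ioc 0 1) := by
  have hbeta := Complex.betaIntegral_convergent (u := u) (v := v) (by simpa) (by simpa)
  rw [intervalIntegrable_iff_integrableOn_Ioc_of_le zero_le_one] at hbeta
  refine IntegrableOn.congr_fun hbeta.re (fun x hx => ?_) measurableSet_Ioc
  rw [← ofReal_rpow_mul_one_sub_rpow (Ioc_subset_Icc_self hx)]
  exact Complex.ofReal_re _

lemma integral_rpow_mul_one_sub_rpow {u v : ℝ} (hu : 0 < u) (hv : 0 < v) :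
    ∫ x in Ioc (0 : ℝ) 1, x ^ (u - 1) * (1 - x) ^ (v - 1) = Gamma u * Gamma v / Gamma (u + v) := by
  apply Complex.ofReal_injective
  rw [← integral_complex_ofReal, setIntegral_congr_fun measurableSet_Ioc
    fun x hx => ofReal_rpow_mul_one_sub_rpow (Ioc_subset_Icc_self hx),
    ← intervalIntegral.integral_of_le zero_le_one, ← Complex.betaIntegral,
    Complex.betaIntegral_eq_Gamma_mul_div _ _ (by simpa) (by simpa)]
  push_cast
  rw [Complex.Gamma_ofReal, Complex.Gamma_ofReal, ← Complex.ofReal_add, Complex.Gamma_ofReal]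

lemma hasDerivAt_div_one_sub {x : ℝ} (hx : x ≠ 1) :
    HasDerivAt (fun y : ℝ => y / (1 - y)) ((1 - x) ^ 2)⁻¹ x := by
  have hx' : 1 - x ≠ 0 := sub_ne_zero.2 (Ne.symm hx)
  have h := (hasDerivAt_id' x).div ((hasDerivAt_const x 1).sub (hasDerivAt_id' x)) hx'
  refine h.congr_deriv ?_
  simp only [Pi.sub_apply]
  field_simp
  ring

lemma strictMonoOn_div_one_sub : StrictMonoOn (fun x : ℝ => x / (1 - x)) (Iio 1) :=
  fun x hx y hy hxy => by
    simp only [mem_Iio] at hx hy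
    rw [div_lt_div_iff₀ (by linarith) (by linarith)]
    nlinarith

lemma image_div_one_sub_Ioo : (fun x : ℝ => x / (1 - x)) '' Ioo 0 1 = Ioi 0 := by
  refine Subset.antisymm ?_ fun u (hu : 0 < u) => ?_
  · rintro - ⟨x, hx, rfl⟩
    exact div_pos hx.1 (sub_pos.2 hx.2)
  · refine ⟨u / (1 + u), ⟨by positivity, (div_lt_one (by positivity)).2 (by linarith)⟩, ?_⟩
    field_simp
    ring

lemma rpow_mul_one_add_rpow_div_one_sub {u v x : ℝ} (hx : x ∈ Ioo (0 : ℝ) 1) :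
    |((1 - x) ^ 2)⁻¹| • ((x / (1 - x)) ^ (u - 1) * (1 + x / (1 - x)) ^ (-(u + v))) =
      x ^ (u - 1) * (1 - x) ^ (v - 1) := by
  have hx1 : 0 < 1 - x := sub_pos.2 hx.2
  have hsum : 1 + x / (1 - x) = (1 - x)⁻¹ := by field_simp; ring
  have hsplit : (1 - x) ^ (u + v) = (1 - x) ^ (u - 1) * (1 - x) ^ (v - 1) * (1 - x) ^ 2 := by
    rw [← rpow_add hx1, ← rpow_natCast, ← rpow_add hx1]
    congr 1
    push_cast
    ring
  rw [hsum, inv_rpow hx1.le, rpow_neg hx1.le, inv_inv, hsplit, div_rpow hx.1.le hx1.le,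
    abs_of_pos (by positivity), smul_eq_mul]
  have : 0 < (1 - x) ^ (u - 1) := by positivity
  field_simp

lemma integrableOn_rpow_mul_one_add_rpow {u v : ℝ} (hu : 0 < u) (hv : 0 < v) :
    IntegrableOn (fun x : ℝ => x ^ (u - 1) * (1 + x) ^ (-(u + v))) (Ioi 0) := by
  rw [← image_div_one_sub_Ioo, integrableOn_image_iff_integrableOn_abs_deriv_smul measurableSet_Ioo
    (fun x hx => (hasDerivAt_div_one_sub hx.2.ne).hasDerivWithinAt)
    (strictMonoOn_div_one_sub.injOn.mono Ioo_subset_Iio_self)]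
  refine IntegrableOn.congr_fun ?_ (fun x hx => (rpow_mul_one_add_rpow_div_one_sub hx).symm)
    measurableSet_Ioo
  exact (integrableOn_rpow_mul_one_sub_rpow hu hv).mono_set Ioo_subset_Ioc_self

lemma integral_rpow_mul_one_add_rpow {u v : ℝ} (hu : 0 < u) (hv : 0 < v) :
    ∫ x in Ioi (0 : ℝ), x ^ (u - 1) * (1 + x) ^ (-(u + v)) = Gamma u * Gamma v / Gamma (u + v) := by
  rw [← image_div_one_sub_Ioo, integral_image_eq_integral_abs_deriv_smul measurableSet_Ioo
    (fun x hx => (hasDerivAt_div_one_sub hx.2.ne).hasDerivWithinAt)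
    (strictMonoOn_div_one_sub.injOn.mono Ioo_subset_Iio_self),
    setIntegral_congr_fun measurableSet_Ioo fun x hx => rpow_mul_one_add_rpow_div_one_sub hx,
    ← integral_Ioc_eq_integral_Ioo, integral_rpow_mul_one_sub_rpow hu hv]

lemma rpow_neg_mul_one_add_inv_eq {α t : ℝ} :
    t ^ (-α) * (1 + t)⁻¹ = t ^ ((1 - α) - 1) * (1 + t) ^ (-((1 - α) + α)) := by
  rw [sub_sub_cancel_left, sub_add_cancel, rpow_neg_one]

lemma integrableOn_rpow_neg_mul_one_add_inv {α : ℝ} (hα : α ∈ Ioo (0 : ℝ) 1) :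
    IntegrableOn (fun t : ℝ => t ^ (-α) * (1 + t)⁻¹) (Ioi 0) := by
  simpa only [rpow_neg_mul_one_add_inv_eq] using
    integrableOn_rpow_mul_one_add_rpow (sub_pos.2 hα.2) hα.1

lemma integral_rpow_neg_mul_one_add_inv {α : ℝ} (hα : α ∈ Ioo (0 : ℝ) 1) :
    ∫ t in Ioi (0 : ℝ), t ^ (-α) * (1 + t)⁻¹ = π / sin (π * α) := by
  simp only [rpow_neg_mul_one_add_inv_eq]
  rw [integral_rpow_mul_one_add_rpow (sub_pos.2 hα.2) hα.1, sub_add_cancel, Gamma_one, div_one,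
    mul_comm, Gamma_mul_Gamma_one_sub]

lemma rpow_neg_mul_inv_add_mul {α x t : ℝ} (hx : 0 < x) (ht : 0 ≤ t) :
    (x * t) ^ (-α) * (x + x * t)⁻¹ = x⁻¹ * x ^ (-α) * (t ^ (-α) * (1 + t)⁻¹) := by
  rw [mul_rpow hx.le ht, ← mul_one_add, mul_inv]
  ring

lemma integrableOn_rpow_neg_mul_inv_add {α x : ℝ} (hα : α ∈ Ioo (0 : ℝ) 1) (hx : 0 < x) :
    IntegrableOn (fun s : ℝ => s ^ (-α) * (x + s)⁻¹) (Ioi 0) := by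
  rw [← mul_zero x, ← integrableOn_Ioi_comp_mul_left_iff _ _ hx]
  refine IntegrableOn.congr_fun ?_ (fun t ht => (rpow_neg_mul_inv_add_mul hx (le_of_lt ht)).symm)
    measurableSet_Ioi
  exact (integrableOn_rpow_neg_mul_one_add_inv hα).const_mul _

lemma integral_rpow_neg_mul_inv_add {α x : ℝ} (hα : α ∈ Ioo (0 : ℝ) 1) (hx : 0 < x) :
    ∫ s in Ioi (0 : ℝ), s ^ (-α) * (x + s)⁻¹ = π / sin (π * α) * x ^ (-α) := by
  have h := integral_comp_mul_left_Ioi (fun s : ℝ => s ^ (-α) * (x + s)⁻¹) 0 hx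
  rw [mul_zero, setIntegral_congr_fun measurableSet_Ioi
    fun t ht => rpow_neg_mul_inv_add_mul hx (le_of_lt ht), integral_const_mul,
    integral_rpow_neg_mul_one_add_inv hα, smul_eq_mul] at h
  rw [← mul_inv_cancel_left₀ hx.ne' (∫ s in Ioi (0 : ℝ), s ^ (-α) * (x + s)⁻¹), ← h]
  field_simp

end Real

section CStarAlgebra

variable {A : Type*} [CStarAlgebra A]

lemma cfc_const_mul_inv_add_const {b : A} (hb : IsSelfAdjoint b) {r : ℝ}
    (hr : ∀ x ∈ spectrum ℝ b, x + r ≠ 0) (c : ℝ) :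
    cfc (fun x : ℝ => c * (x + r)⁻¹) b = c • Ring.inverse (b + algebraMap ℝ A r) := by
  have hcont : ContinuousOn (fun x : ℝ => (x + r)⁻¹) (spectrum ℝ b) :=
    (continuousOn_id.add continuousOn_const).inv₀ hr
  rw [cfc_const_mul c _ b hcont, cfc_inv (fun x : ℝ => x + r) b hr,
    cfc_add_const r (fun x : ℝ => x) b, cfc_id' ℝ b]

variable [PartialOrder A] [StarOrderedRing A]

theorem integral_rpow_neg_smul_ringInverse_add {b : A} {c : ℝ} (hc : 0 < c)
    (hcb : algebraMap ℝ A c ≤ b) {α : ℝ} (hα : α ∈ Ioo (0 : ℝ) 1) :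
    IntegrableOn (fun s : ℝ => s ^ (-α) • Ring.inverse (b + algebraMap ℝ A s)) (Ioi 0) ∧
    ∫ s in Ioi (0 : ℝ), s ^ (-α) • Ring.inverse (b + algebraMap ℝ A s) =
      (π / sin (π * α)) • cfc (fun x : ℝ => x ^ (-α)) b := by
  have hb : IsSelfAdjoint b := .of_nonneg ((algebraMap_nonneg A hc.le).trans hcb)
  have hspec : ∀ x ∈ spectrum ℝ b, c ≤ x := (algebraMap_le_iff_le_spectrum hb).1 hcb
  let f : ℝ → ℝ → ℝ := fun s x => s ^ (-α) * (x + s)⁻¹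
  have hcfc : EqOn (fun s => cfc (f s) b)
      (fun s => s ^ (-α) • Ring.inverse (b + algebraMap ℝ A s)) (Ioi 0) := fun s hs =>
    cfc_const_mul_inv_add_const hb (fun x hx => by linarith [hspec x hx, mem_Ioi.1 hs]) _
  have hcont : ContinuousOn (Function.uncurry f) (Ioi 0 ×ˢ spectrum ℝ b) :=
    (continuousOn_fst.rpow_const fun p hp => .inl (ne_of_gt hp.1)).mul <|
      (continuousOn_snd.add continuousOn_fst).inv₀ fun p hp =>
        (add_pos (hc.trans_le (hspec _ hp.2)) hp.1).ne'
  have hbound : ∀ᵐ s ∂(volume.restrict (Ioi (0 : ℝ))), ∀ x ∈ spectrum ℝ b,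
      ‖f s x‖ ≤ s ^ (-α) * (c + s)⁻¹ := by
    filter_upwards [ae_restrict_mem measurableSet_Ioi] with s (hs : 0 < s) x hx
    have hcx := hspec x hx
    have hx0 : 0 < x := hc.trans_le hcx
    rw [norm_of_nonneg (by positivity)]
    dsimp only [f]
    gcongr
  have hfin := (integrableOn_rpow_neg_mul_inv_add hα hc).hasFiniteIntegral
  refine ⟨(integrableOn_cfc measurableSet_Ioi f _ b hcont hbound hfin).congr_fun hcfc
    measurableSet_Ioi, ?_⟩
  rw [← setIntegral_congr_fun measurableSet_Ioi hcfc,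
    ← cfc_setIntegral measurableSet_Ioi f _ b hcont hbound hfin,
    ← cfc_const_mul _ (fun x : ℝ => x ^ (-α)) b
      (continuousOn_id.rpow_const fun x hx => .inl (hc.trans_le (hspec x hx)).ne')]
  exact cfc_congr fun x hx => integral_rpow_neg_mul_inv_add hα (hc.trans_le (hspec x hx))

end CStarAlgebra

/-- In a unital C*-algebra, for a positive element `a`, `ε > 0` and `α ∈ (0,1)`, the Bochner
integral `(sin(απ)/π) ∫_0^∞ s^{-α} (a + (s+ε)·1)⁻¹ ds` converges in norm and equals the
real power `(a + ε·1)^{-α}` given by the continuous functional calculus. -/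
theorem stmt_7 (A : Type*) [CStarAlgebra A] [PartialOrder A] [StarOrderedRing A]
    (a : A) (ha : 0 ≤ a) (ε α : ℝ) (hε : 0 < ε) (hα : α ∈ Set.Ioo (0 : ℝ) 1) :
    IntegrableOn (fun s : ℝ =>
      ((s ^ (-α) : ℝ) : ℂ) • Ring.inverse (a + ((s + ε : ℝ) : ℂ) • (1 : A)))
      (Set.Ioi (0 : ℝ)) ∧
    ((Real.sin (α * π) / π : ℝ) : ℂ) •
        (∫ s in Set.Ioi (0 : ℝ),
          ((s ^ (-α) : ℝ) : ℂ) • Ring.inverse (a + ((s + ε : ℝ) : ℂ) • (1 : A))) =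
      cfc (fun x : ℝ => x ^ (-α)) (a + ((ε : ℝ) : ℂ) • (1 : A)) := by
  have hεa : algebraMap ℝ A ε ≤ a + ε • 1 := by
    rw [Algebra.algebraMap_eq_smul_one]
    exact le_add_of_nonneg_left ha
  have hsin : sin (π * α) ≠ 0 :=
    (sin_pos_of_pos_of_lt_pi (mul_pos pi_pos hα.1) (mul_lt_of_lt_one_right pi_pos hα.2)).ne'
  have hintegrand :
      (fun s : ℝ => ((s ^ (-α) : ℝ) : ℂ) • Ring.inverse (a + ((s + ε : ℝ) : ℂ) • (1 : A))) =
        fun s : ℝ => s ^ (-α) • Ring.inverse (a + ε • 1 + algebraMap ℝ A s) := by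
    funext s
    rw [Complex.coe_smul, Complex.coe_smul, Algebra.algebraMap_eq_smul_one, add_smul, add_assoc,
      add_comm (s • (1 : A))]
  obtain ⟨hint, hval⟩ := integral_rpow_neg_smul_ringInverse_add hε hεa hα
  rw [hintegrand, Complex.coe_smul, Complex.coe_smul, hval, smul_smul, mul_comm α π,
    div_mul_div_cancel₀ pi_ne_zero, div_self hsin, one_smul]
  exact ⟨hint, rfl⟩
end

section
/- For every real m > 0, the Fejér kernel f_m is differentiable on \mathbb{R} and its derivative satisfies |f_m'(t)| \le m^2/\pi for all t \in \mathbb{R}. -/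
/-!
Since `1 - cos (m t) = 2 sin² (m t / 2)`, the Fejér kernel is `f_m(t) = m / (2π) · sinc (m t / 2)²`.
The representation `sinc x = ∫₀¹ cos (x t) dt` makes `sinc` differentiable everywhere, the origin
included, with `|sinc' x| = |∫₀¹ t sin (x t) dt| ≤ 1/2`. Together with `|sinc| ≤ 1` the chain
rule gives `|f_m'| ≤ m² / (4π)`.
-/

open MeasureTheory Real

/-- The Fejér kernel on `ℝ`: `f_m(0) = m/(2π)` and `f_m(t) = (1 - cos(mt))/(π m t²)` for
`t ≠ 0`. -/
noncomputable def fejer (m t : ℝ) : ℝ :=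
  if t = 0 then m / (2 * π) else (1 - Real.cos (m * t)) / (π * m * t ^ 2)

namespace Real

theorem integral_cos_mul_eq_sinc (x : ℝ) : ∫ t in (0 : ℝ)..1, cos (x * t) = sinc x := by
  rcases eq_or_ne x 0 with rfl | hx
  · simp
  · rw [intervalIntegral.integral_comp_mul_left cos hx, mul_zero, mul_one, integral_cos,
      sin_zero, sub_zero, sinc_of_ne_zero hx, div_eq_inv_mul, smul_eq_mul]

theorem hasDerivAt_sinc (x : ℝ) :
    HasDerivAt sinc (-∫ t in (0 : ℝ)..1, t * sin (x * t)) x := by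
  have hderiv (t y : ℝ) : HasDerivAt (fun y => cos (y * t)) (-(t * sin (y * t))) y := by
    simpa [mul_comm] using ((hasDerivAt_mul_const t).cos : HasDerivAt (fun y => cos (y * t)) _ y)
  have hbound : ∀ᵐ t, t ∈ Set.uIoc (0 : ℝ) 1 → ∀ y ∈ (Set.univ : Set ℝ),
      ‖-(t * sin (y * t))‖ ≤ 1 := by
    refine Filter.Eventually.of_forall fun t ht y _ => ?_
    rw [Set.uIoc_of_le zero_le_one] at ht
    rw [norm_neg, norm_mul, Real.norm_of_nonneg ht.1.le]
    exact mul_le_one₀ ht.2 (norm_nonneg _) (abs_sin_le_one _)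
  have h := intervalIntegral.hasDerivAt_integral_of_dominated_loc_of_deriv_le
    (F := fun y t => cos (y * t)) (x₀ := x) (a := 0) (b := 1) (bound := fun _ => 1)
    Filter.univ_mem (.of_forall fun _ => (by fun_prop : Continuous _).aestronglyMeasurable)
    (Continuous.intervalIntegrable (by fun_prop) _ _)
    (by fun_prop : Continuous fun t => -(t * sin (x * t))).aestronglyMeasurable
    hbound intervalIntegrable_const (.of_forall fun t _ y _ => hderiv t y)
  rw [intervalIntegral.integral_neg] at h
  simpa only [integral_cos_mul_eq_sinc] using h.2

theorem differentiable_sinc : Differentiable ℝ sinc := fun x =>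
  (hasDerivAt_sinc x).differentiableAt

theorem abs_deriv_sinc_le (x : ℝ) : |deriv sinc x| ≤ 1 / 2 := by
  rw [(hasDerivAt_sinc x).deriv, abs_neg]
  calc |∫ t in (0 : ℝ)..1, t * sin (x * t)|
      ≤ ∫ t in (0 : ℝ)..1, |t * sin (x * t)| :=
        intervalIntegral.abs_integral_le_integral_abs zero_le_one
    _ ≤ ∫ t in (0 : ℝ)..1, t := by
        refine intervalIntegral.integral_mono_on zero_le_one
          (Continuous.intervalIntegrable (by fun_prop) _ _)
          (Continuous.intervalIntegrable (by fun_prop) _ _) fun t ht => ?_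
        rw [abs_mul, abs_of_nonneg ht.1]
        exact mul_le_of_le_one_right ht.1 (abs_sin_le_one _)
    _ = 1 / 2 := by norm_num [integral_id]

end Real

theorem fejer_eq_sinc_sq (m : ℝ) : fejer m = fun t => m / (2 * π) * sinc (m * t / 2) ^ 2 := by
  funext t
  rcases eq_or_ne t 0 with rfl | ht
  · simp [fejer]
  rcases eq_or_ne m 0 with rfl | hm
  · simp [fejer]
  have hmt : m * t / 2 ≠ 0 := by positivity
  rw [fejer, if_neg ht, sinc_of_ne_zero hmt, div_pow, sin_sq_eq_half_sub,
    show 2 * (m * t / 2) = m * t by ring]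
  field_simp

theorem hasDerivAt_fejer (m t : ℝ) :
    HasDerivAt (fejer m) (m ^ 2 / (2 * π) * sinc (m * t / 2) * deriv sinc (m * t / 2)) t := by
  have hinner : HasDerivAt (fun t => m * t / 2) (m / 2) t := by
    simpa using ((hasDerivAt_id t).const_mul m).div_const 2
  have hsinc : HasDerivAt (fun t => sinc (m * t / 2)) (deriv sinc (m * t / 2) * (m / 2)) t :=
    (Real.differentiable_sinc _).hasDerivAt.comp t hinner
  rw [fejer_eq_sinc_sq]
  refine ((hsinc.fun_pow 2).const_mul (m / (2 * π))).congr_deriv ?_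
  norm_num
  ring

theorem stmt_11_general (m : ℝ) :
    Differentiable ℝ (fejer m) ∧ ∀ t : ℝ, |deriv (fejer m) t| ≤ m ^ 2 / π := by
  refine ⟨fun t => (hasDerivAt_fejer m t).differentiableAt, fun t => ?_⟩
  rw [(hasDerivAt_fejer m t).deriv, abs_mul, abs_mul, abs_of_nonneg (by positivity)]
  calc m ^ 2 / (2 * π) * |sinc (m * t / 2)| * |deriv sinc (m * t / 2)|
      ≤ m ^ 2 / (2 * π) * 1 * (1 / 2) := by
        gcongr
        exacts [abs_sinc_le_one _, Real.abs_deriv_sinc_le _]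
    _ ≤ m ^ 2 / π := by
        rw [mul_one, div_mul_div_comm, mul_one]
        gcongr
        nlinarith [pi_pos]

/-- For every `m > 0`, the Fejér kernel `f_m` is differentiable on `ℝ` and its derivative
satisfies `|f_m'(t)| ≤ m²/π` for all `t`. -/
theorem stmt_11 (m : ℝ) (hm : 0 < m) :
    Differentiable ℝ (fejer m) ∧ ∀ t : ℝ, |deriv (fejer m) t| ≤ m ^ 2 / π :=
  stmt_11_general m
end

section
/- For every real t, \arctan(t) = \frac{t}{1 + t^2} \sum_{n=0}^{\infty} \frac{(n!)^2 \, 4^n}{(2n+1)!} \left( \frac{t^2}{1 + t^2} \right)^n, the series converging for every real t (Euler's arctangent series). -/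
/-!
Put `G y = ∑ aₙ y^(2n+1)` with `aₙ = (n!)² 4ⁿ / (2n+1)!`. The recursion
`(2n+3) aₙ₊₁ = (2n+2) aₙ` makes `(1 - y²) G' - y G` telescope to `a₀ = 1`, which is the
differential equation satisfied by `arcsin y / √(1 - y²)`; both vanish at `0`, so
`√(1 - y²) G y = arcsin y` on `(-1, 1)`. Substituting `y = t / √(1 + t²)`, for which
`arcsin y = arctan t`, `y² = t² / (1 + t²)` and `√(1 - y²) y = t / (1 + t²)`, gives the series.
-/

open Real Set

noncomputable def eulerArctanCoeff (n : ℕ) : ℝ :=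
  (n.factorial : ℝ) ^ 2 * 4 ^ n / ((2 * n + 1).factorial : ℝ)

namespace eulerArctanCoeff

lemma pos (n : ℕ) : 0 < eulerArctanCoeff n := by
  unfold eulerArctanCoeff; positivity

@[simp] lemma zero : eulerArctanCoeff 0 = 1 := by simp [eulerArctanCoeff]

lemma succ (n : ℕ) :
    (2 * n + 3) * eulerArctanCoeff (n + 1) = (2 * n + 2) * eulerArctanCoeff n := by
  have hfact : (2 * (n + 1) + 1).factorial =
      (2 * n + 3) * ((2 * n + 2) * (2 * n + 1).factorial) := by
    rw [show 2 * (n + 1) + 1 = 2 * n + 1 + 1 + 1 by ring, Nat.factorial_succ, Nat.factorial_succ]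
  unfold eulerArctanCoeff
  rw [hfact, Nat.factorial_succ]
  push_cast
  field_simp
  ring

lemma le_one (n : ℕ) : eulerArctanCoeff n ≤ 1 := by
  induction n with
  | zero => simp
  | succ n ih => nlinarith [succ n, pos n]

lemma abs_le_one (n : ℕ) : |eulerArctanCoeff n| ≤ 1 := by
  rw [abs_of_pos (pos n)]; exact le_one n

end eulerArctanCoeff

section OddPowerSeries

variable {c : ℕ → ℝ}

lemma summable_odd_mul_pow_two_mul {r : ℝ} (hr : |r| < 1) :
    Summable fun n : ℕ => (2 * n + 1 : ℝ) * r ^ (2 * n) := by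
  have hr2 : ‖r ^ 2‖ < 1 := by
    rw [norm_pow, Real.norm_eq_abs]; exact pow_lt_one₀ (abs_nonneg r) hr two_ne_zero
  refine (((summable_pow_mul_geometric_of_norm_lt_one 1 hr2).mul_left 2).add
    (summable_geometric_of_norm_lt_one hr2)).congr fun n => ?_
  rw [pow_mul]; ring

lemma abs_odd_mul_mul_pow_le (hc : ∀ n, |c n| ≤ 1) (n : ℕ) {r z : ℝ} (hz : |z| ≤ r) :
    |(2 * n + 1 : ℝ) * c n * z ^ (2 * n)| ≤ (2 * n + 1 : ℝ) * r ^ (2 * n) := by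
  rw [abs_mul, abs_mul, abs_pow, abs_of_pos (by positivity : (0 : ℝ) < 2 * n + 1)]
  calc (2 * n + 1 : ℝ) * |c n| * |z| ^ (2 * n) ≤ (2 * n + 1) * 1 * r ^ (2 * n) := by
        gcongr; exact hc n
    _ = _ := by ring

lemma summable_mul_pow_two_mul_add_one (hc : ∀ n, |c n| ≤ 1) {y : ℝ} (hy : |y| < 1) :
    Summable fun n : ℕ => c n * y ^ (2 * n + 1) := by
  refine (summable_odd_mul_pow_two_mul (r := |y|) (by rwa [abs_abs])).of_norm_bounded fun n => ?_
  rw [Real.norm_eq_abs, abs_mul, abs_pow, pow_succ]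
  calc |c n| * (|y| ^ (2 * n) * |y|) ≤ 1 * (|y| ^ (2 * n) * 1) := by
        gcongr; exact hc n
    _ ≤ (2 * n + 1 : ℝ) * |y| ^ (2 * n) := by nlinarith [pow_nonneg (abs_nonneg y) (2 * n)]

lemma summable_odd_mul_mul_pow_two_mul (hc : ∀ n, |c n| ≤ 1) {y : ℝ} (hy : |y| < 1) :
    Summable fun n : ℕ => (2 * n + 1 : ℝ) * c n * y ^ (2 * n) :=
  (summable_odd_mul_pow_two_mul (r := |y|) (by rwa [abs_abs])).of_norm_bounded
    fun n => abs_odd_mul_mul_pow_le hc n le_rfl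

lemma hasDerivAt_tsum_mul_pow_two_mul_add_one (hc : ∀ n, |c n| ≤ 1) {y : ℝ} (hy : |y| < 1) :
    HasDerivAt (fun z => ∑' n : ℕ, c n * z ^ (2 * n + 1))
      (∑' n : ℕ, (2 * n + 1 : ℝ) * c n * y ^ (2 * n)) y := by
  obtain ⟨r, hyr, hr⟩ := exists_between hy
  have hball : ∀ z, z ∈ Metric.ball (0 : ℝ) r ↔ |z| < r := by simp
  refine hasDerivAt_tsum_of_isPreconnected
    (g' := fun (n : ℕ) z => (2 * n + 1 : ℝ) * c n * z ^ (2 * n))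
    (summable_odd_mul_pow_two_mul (r := r) ?_) Metric.isOpen_ball
    (convex_ball 0 r).isPreconnected (fun n z _ => ?_)
    (fun n z hz => abs_odd_mul_mul_pow_le hc n ((hball z).1 hz).le) (y₀ := 0) ?_ ?_
    ((hball y).2 hyr)
  · rwa [abs_of_pos ((abs_nonneg y).trans_lt hyr)]
  · refine ((hasDerivAt_pow (2 * n + 1) z).const_mul (c n)).congr_deriv ?_
    rw [Nat.add_sub_cancel]; push_cast; ring
  · simpa using (abs_nonneg y).trans_lt hyr
  · simp

end OddPowerSeries

noncomputable def eulerSeries (y : ℝ) : ℝ := ∑' n : ℕ, eulerArctanCoeff n * y ^ (2 * n + 1)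

lemma one_sub_sq_mul_tsum_eq_one_add_mul_eulerSeries {y : ℝ} (hy : |y| < 1) :
    (1 - y ^ 2) * ∑' n : ℕ, (2 * n + 1 : ℝ) * eulerArctanCoeff n * y ^ (2 * n) =
      1 + y * eulerSeries y := by
  set b : ℕ → ℝ := fun n => (2 * n + 1 : ℝ) * eulerArctanCoeff n * y ^ (2 * n)
  have hb : Summable b := summable_odd_mul_mul_pow_two_mul eulerArctanCoeff.abs_le_one hy
  have ha : Summable fun n : ℕ => eulerArctanCoeff n * y ^ (2 * n + 1) :=
    summable_mul_pow_two_mul_add_one eulerArctanCoeff.abs_le_one hy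
  have htelescope (n : ℕ) :
      (1 - y ^ 2) * b n - y * (eulerArctanCoeff n * y ^ (2 * n + 1)) = b n - b (n + 1) := by
    simp only [b]
    push_cast
    rw [show 2 * (n + 1) = 2 * n + 2 by ring, pow_add, pow_succ]
    linear_combination (y ^ (2 * n) * y ^ 2) * eulerArctanCoeff.succ n
  have hsum : ∑' n, (b n - b (n + 1)) = b 0 := by
    rw [hb.tsum_sub ((summable_nat_add_iff 1).2 hb), hb.tsum_eq_zero_add, add_sub_cancel_right]
  rw [eulerSeries, ← sub_eq_iff_eq_add, ← tsum_mul_left, ← tsum_mul_left,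
    ← (hb.mul_left _).tsum_sub (ha.mul_left y), tsum_congr htelescope, hsum]
  simp [b]

lemma hasDerivAt_eulerSeries {y : ℝ} (hy : |y| < 1) :
    HasDerivAt eulerSeries ((1 + y * eulerSeries y) / (1 - y ^ 2)) y := by
  have hpos : 0 < 1 - y ^ 2 := sub_pos.2 ((sq_lt_one_iff_abs_lt_one y).2 hy)
  rw [← one_sub_sq_mul_tsum_eq_one_add_mul_eulerSeries hy, mul_div_cancel_left₀ _ hpos.ne']
  exact hasDerivAt_tsum_mul_pow_two_mul_add_one eulerArctanCoeff.abs_le_one hy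

lemma sqrt_one_sub_sq_mul_eulerSeries {y : ℝ} (hy : |y| < 1) :
    √(1 - y ^ 2) * eulerSeries y = arcsin y := by
  let H : ℝ → ℝ := fun z => √(1 - z ^ 2) * eulerSeries z - arcsin z
  have hH (z : ℝ) (hz : z ∈ Ioo (-1 : ℝ) 1) : HasDerivAt H 0 z := by
    have hpos : 0 < 1 - z ^ 2 := sub_pos.2 ((sq_lt_one_iff_abs_lt_one z).2 (abs_lt.2 hz))
    have hs : √(1 - z ^ 2) ^ 2 = 1 - z ^ 2 := sq_sqrt hpos.le
    have hsqrt := ((hasDerivAt_pow 2 z).const_sub 1).sqrt hpos.ne'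
    refine ((hsqrt.mul (hasDerivAt_eulerSeries (abs_lt.2 hz))).sub
      (hasDerivAt_arcsin hz.1.ne' hz.2.ne)).congr_deriv ?_
    field_simp
    linear_combination 2 * (1 + z * eulerSeries z) * hs
  have hconst := isOpen_Ioo.is_const_of_deriv_eq_zero isPreconnected_Ioo
    (fun z hz => (hH z hz).differentiableAt.differentiableWithinAt) (fun z hz => (hH z hz).deriv)
    (abs_lt.1 hy) (show (0 : ℝ) ∈ Ioo (-1) 1 by norm_num)
  simpa [H, eulerSeries, sub_eq_zero] using hconst

lemma hasSum_arcsin {y : ℝ} (hy : |y| < 1) :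
    HasSum (fun n : ℕ => √(1 - y ^ 2) * (eulerArctanCoeff n * y ^ (2 * n + 1))) (arcsin y) := by
  rw [← sqrt_one_sub_sq_mul_eulerSeries hy]
  exact (summable_mul_pow_two_mul_add_one eulerArctanCoeff.abs_le_one hy).hasSum.mul_left _

/-- Euler's arctangent series: for every real `t`,
`arctan t = (t/(1+t²)) ∑_{n≥0} (n!)² 4ⁿ/(2n+1)! · (t²/(1+t²))ⁿ`, the series converging
for every real `t`. -/
theorem stmt_14 (t : ℝ) :
    HasSum (fun n : ℕ =>
      (t / (1 + t ^ 2)) *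
        (((n.factorial : ℝ) ^ 2 * 4 ^ n / ((2 * n + 1).factorial : ℝ)) *
          (t ^ 2 / (1 + t ^ 2)) ^ n))
      (Real.arctan t) := by
  set s := √(1 + t ^ 2)
  have hs : 0 < s := sqrt_pos.2 (by positivity)
  have hs2 : s ^ 2 = 1 + t ^ 2 := sq_sqrt (by positivity)
  have hy : |t / s| < 1 := by
    rw [abs_div, abs_of_pos hs, div_lt_one hs]
    exact abs_lt_of_sq_lt_sq (by linarith) hs.le
  have hsqrt : √(1 - (t / s) ^ 2) = 1 / s := by
    rw [← sqrt_sq (one_div_pos.2 hs).le]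
    congr 1
    field_simp
    linarith
  rw [← hs2, arctan_eq_arcsin]
  convert hasSum_arcsin hy using 1
  funext n
  rw [hsqrt, eulerArctanCoeff, pow_succ (t / s), pow_mul, div_pow t s 2]
  ring
end
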